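/- Let T be a tree of height ω₂ without cofinal branches, M ≺ (H_θ, ∈, T) countable. If t is guessed in M but η_M(t) ∉ M, then ht(t) ≤ min(M ∩ ω₂ \ η_M(t)), where η_M(t) = sup{ht(s) : s ∈ T ∩ M, s ≤_T t}. -/

import Mathlib

universe u

open Cardinal Set Classical

/-- A partial order is a tree if the predecessors of every node are well-ordered. -/
def IsTree (T : Type u) [PartialOrder T] : Prop :=
  ∀ t : T, IsWellOrder {s : T // s < t} (· < ·)

/-- The order type of a subset of a partial order (0 if it is not well-ordered). -/
noncomputable def otype {T : Type u} [PartialOrder T] (A : Set T) : Ordinal.{u} :=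
  if h : IsWellOrder ↥A (fun x y : A => (x : T) < (y : T)) then
    @Ordinal.type ↥A (fun x y : A => (x : T) < (y : T)) h
  else 0

/-- The height of a node: the order type of its set of strict predecessors. -/
noncomputable def nodeHt {T : Type u} [PartialOrder T] (t : T) : Ordinal.{u} :=
  otype {s : T | s < t}

/-- The height of a tree: sup of ht(t)+1. -/
noncomputable def treeHt (T : Type u) [PartialOrder T] : Ordinal.{u} :=
  ⨆ t : T, (nodeHt t + 1)

/-- A branch: a downward-closed chain. -/
def IsBranch {T : Type u} [PartialOrder T] (b : Set T) : Prop :=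
  IsChain (· ≤ ·) b ∧ ∀ ⦃s t : T⦄, t ∈ b → s < t → s ∈ b

/-- T has no cofinal branches: no branch has order type equal to the height of T. -/
def NoCofinalBranch (T : Type u) [PartialOrder T] : Prop :=
  ∀ b : Set T, IsBranch b → otype b ≠ treeHt T

/-- An elementary submodel M ≺ (H_θ, ∈, T), recorded by its traces: the nodes of T
in M, the subsets of T in M, and the ordinals in M, together with closure
properties that hold for any elementary submodel (closure under the definable
operations used here). -/
structure ElemModel (T : Type u) [PartialOrder T] where
  nodes : Set T
  sets : Set (Set T)
  ords : Set Ordinal.{u}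
  /-- the height of a node of M is in M -/
  ht_mem : ∀ s ∈ nodes, nodeHt s ∈ ords
  /-- M is closed under ordinal successor -/
  succ_mem : ∀ α ∈ ords, α + 1 ∈ ords
  /-- the order type of a set in M is in M -/
  otype_mem : ∀ b ∈ sets, otype b ∈ ords
  /-- b̄_s = {u : u ≤ s} is in M for s ∈ M -/
  leDown_mem : ∀ s ∈ nodes, {u : T | u ≤ s} ∈ sets
  /-- b_s = {u : u < s} is in M for s ∈ M -/
  ltDown_mem : ∀ s ∈ nodes, {u : T | u < s} ∈ sets
  /-- the element of a branch of M sitting at a height in M is in M -/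
  branch_node_at : ∀ b ∈ sets, IsBranch b → ∀ s ∈ b, nodeHt s ∈ ords → s ∈ nodes

/-- t is guessed in M: some branch of T lying in M contains t. -/
def Guessed {T : Type u} [PartialOrder T] (M : ElemModel T) (t : T) : Prop :=
  ∃ b ∈ M.sets, IsBranch b ∧ t ∈ b

/-- η_A(t) = sup { ht(s) : s ∈ A, s ≤ t }. -/
noncomputable def eta {T : Type u} [PartialOrder T] (A : Set T) (t : T) : Ordinal.{u} :=
  sSup (nodeHt '' {s : T | s ∈ A ∧ s ≤ t})

/-- ω₁ ⊆ M. -/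
def ElemModel.Om1Sub {T : Type u} [PartialOrder T] (M : ElemModel T) : Prop :=
  ∀ α : Ordinal.{u}, α < (Cardinal.aleph 1).ord → α ∈ M.ords

/-- M is an ω₁-guessing model (for subsets of T): every set of nodes that is
ω₁-approximated in M is guessed in M. -/
def ElemModel.IsGuessing {T : Type u} [PartialOrder T] (M : ElemModel T) : Prop :=
  ∀ x : Set T, (∀ a ∈ M.sets, a.Countable → x ∩ a ∈ M.sets) →
    ∃ y ∈ M.sets, y ∩ M.nodes = x ∩ M.nodes

/-- Elements of M of size ≤ ℵ₁ are subsets of M (this holds for internally club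
models of size ℵ₁ with ω₁ ⊆ M). -/
def ElemModel.MembersSub {T : Type u} [PartialOrder T] (M : ElemModel T) : Prop :=
  ∀ b ∈ M.sets, Cardinal.mk ↥b ≤ Cardinal.aleph 1 → b ⊆ M.nodes

section Aux

variable {T : Type u} [PartialOrder T]

private lemma dc_wo (hT : IsTree T) {A : Set T}
    (hlin : ∀ x ∈ A, ∀ y ∈ A, x = y ∨ x < y ∨ y < x)
    (hdc : ∀ ⦃s⦄, s ∈ A → ∀ ⦃v : T⦄, v < s → v ∈ A) :
    IsWellOrder ↥A (fun x y : A => (x : T) < (y : T)) := by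
  haveI tri : IsTrichotomous ↥A (fun x y : A => (x : T) < (y : T)) := ⟨fun x y => by
    rcases hlin x x.2 y y.2 with h | h | h
    · exact fun _ _ => Subtype.ext h
    · exact fun h' => absurd h h'
    · exact fun _ h' => absurd h h'⟩
  haveI tr : IsTrans ↥A (fun x y : A => (x : T) < (y : T)) :=
    ⟨fun _ _ _ h1 h2 => lt_trans h1 h2⟩
  haveI wf : IsWellFounded ↥A (fun x y : A => (x : T) < (y : T)) := ⟨?_⟩
  · constructor
  rw [WellFounded.wellFounded_iff_has_min]
  intro S hS
  obtain ⟨s, hsS⟩ := hS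
  by_cases hc : ∃ x ∈ S, (x : T) < (s : T)
  · obtain ⟨x, hxS, hxs⟩ := hc
    have hwo := hT (s : T)
    have hwf : WellFounded (fun a b : {v : T // v < (s : T)} => a < b) := hwo.wf
    set S' : Set {v : T // v < (s : T)} := {v | (⟨v.1, hdc s.2 v.2⟩ : A) ∈ S} with hS'
    have hx' : (⟨(x : T), hxs⟩ : {v : T // v < (s : T)}) ∈ S' := by
      have : (⟨(x : T), hdc s.2 hxs⟩ : A) = x := Subtype.ext rfl
      simpa [hS', this] using hxS
    obtain ⟨m, hmS', hmin⟩ := hwf.has_min S' ⟨_, hx'⟩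
    refine ⟨⟨m.1, hdc s.2 m.2⟩, hmS', ?_⟩
    intro y hyS hym
    have hys : (y : T) < (s : T) := lt_trans hym m.2
    have hy' : (⟨(y : T), hys⟩ : {v : T // v < (s : T)}) ∈ S' := by
      have : (⟨(y : T), hdc s.2 hys⟩ : A) = y := Subtype.ext rfl
      simpa [hS', this] using hyS
    exact hmin _ hy' hym
  · exact ⟨s, hsS, fun x hx hlt => hc ⟨x, hx, hlt⟩⟩

private lemma nodeHt_eq_typein (hT : IsTree T) {A : Set T}
    (h : IsWellOrder ↥A (fun x y : A => (x : T) < (y : T)))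
    (hdc : ∀ ⦃s⦄, s ∈ A → ∀ ⦃v : T⦄, v < s → v ∈ A) {s : T} (hs : s ∈ A) :
    nodeHt s = @Ordinal.typein ↥A (fun x y : A => (x : T) < (y : T)) h ⟨s, hs⟩ := by
  rw [← @Ordinal.type_subrel ↥A (fun x y : A => (x : T) < (y : T)) h ⟨s, hs⟩]
  have hwo : IsWellOrder ↥{v : T | v < s}
      (fun x y : ↥{v : T | v < s} => (x : T) < (y : T)) := hT s
  unfold nodeHt otype
  rw [dif_pos hwo]
  refine Ordinal.type_eq.2 ⟨⟨⟨fun v => ⟨⟨v.1, hdc hs v.2⟩, v.2⟩,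
    fun y => ⟨y.1.1, y.2⟩, fun v => rfl, fun y => rfl⟩, Iff.rfl⟩⟩

end Aux

/-- T of height ω₂ without cofinal branches, M ≺ (H_θ, ∈, T)
countable.  If t is guessed in M but η_M(t) ∉ M, then
ht(t) ≤ min (M ∩ ω₂ \ η_M(t)); in particular this minimum exists. -/
theorem stmt10 {T : Type u} [PartialOrder T] (hT : IsTree T)
    (hht : treeHt T = (Cardinal.aleph 2).ord) (hnc : NoCofinalBranch T)
    (M : ElemModel T)
    (hMc : M.nodes.Countable ∧ M.sets.Countable ∧ M.ords.Countable)
    (t : T) (hg : Guessed M t) (he : eta M.nodes t ∉ M.ords) :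
    {α : Ordinal.{u} | α ∈ M.ords ∧ α < (Cardinal.aleph 2).ord ∧
        eta M.nodes t ≤ α}.Nonempty ∧
    nodeHt t ≤ sInf {α : Ordinal.{u} | α ∈ M.ords ∧ α < (Cardinal.aleph 2).ord ∧
        eta M.nodes t ≤ α} := by
  obtain ⟨b, hbM, hbBr, htb⟩ := hg
  have hdcb : ∀ ⦃s⦄, s ∈ b → ∀ ⦃v : T⦄, v < s → v ∈ b := fun s hs v hv => hbBr.2 hs hv
  have hlinb : ∀ x ∈ b, ∀ y ∈ b, x = y ∨ x < y ∨ y < x := by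
    intro x hx y hy
    by_cases hxy : x = y
    · exact Or.inl hxy
    · rcases hbBr.1 hx hy hxy with h | h
      · exact Or.inr (Or.inl (lt_of_le_of_ne h hxy))
      · exact Or.inr (Or.inr (lt_of_le_of_ne h (Ne.symm hxy)))
  have hwb := dc_wo hT hlinb hdcb
  have hob : otype b = @Ordinal.type ↥b (fun x y : b => (x : T) < (y : T)) hwb :=
    dif_pos hwb
  have hmemb : ∀ ⦃s : T⦄, s ∈ M.nodes → s ≤ t → s ∈ b := by
    intro s _ hst
    rcases lt_or_eq_of_le hst with h | h
    · exact hbBr.2 htb h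
    · exact h ▸ htb
  have heta_le : eta M.nodes t ≤ otype b := by
    apply csSup_le'
    rintro o ⟨s, ⟨hsM, hst⟩, rfl⟩
    have hsb : s ∈ b := hmemb hsM hst
    rw [nodeHt_eq_typein hT hwb hdcb hsb, hob]
    exact (Ordinal.typein_lt_type _ _).le
  have hoblt : otype b < treeHt T := by
    rcases lt_or_ge (otype b) (treeHt T) with h | h
    · exact h
    rcases h.lt_or_eq with hlt | heq
    · exfalso
      rw [hob] at hlt
      obtain ⟨x, hx⟩ := Ordinal.typein_surj _ hlt
      have hx' := nodeHt_eq_typein hT hwb hdcb x.2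
      have h2 : nodeHt (x : T) + 1 ≤ treeHt T :=
        le_ciSup (Ordinal.bddAbove_range _) (x : T)
      have h3 : treeHt T = nodeHt (x : T) := by
        rw [hx']; exact hx.symm
      have h4 : nodeHt (x : T) + 1 ≤ nodeHt (x : T) := h3 ▸ h2
      exact absurd h4 (not_le.2 (by rw [Ordinal.add_one_eq_succ]; exact Order.lt_succ _))
    · exact absurd heq.symm (hnc b hbBr)
  have hobS : otype b ∈ {α : Ordinal.{u} | α ∈ M.ords ∧ α < (Cardinal.aleph 2).ord ∧
      eta M.nodes t ≤ α} := ⟨M.otype_mem b hbM, hht ▸ hoblt, heta_le⟩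
  have hne : {α : Ordinal.{u} | α ∈ M.ords ∧ α < (Cardinal.aleph 2).ord ∧
      eta M.nodes t ≤ α}.Nonempty := ⟨otype b, hobS⟩
  refine ⟨hne, ?_⟩
  set η := sInf {α : Ordinal.{u} | α ∈ M.ords ∧ α < (Cardinal.aleph 2).ord ∧
      eta M.nodes t ≤ α} with hη
  have hηS := csInf_mem hne
  by_contra hcon
  push_neg at hcon
  -- η < nodeHt t
  have hwt : IsWellOrder ↥{v : T | v < t}
      (fun x y : ↥{v : T | v < t} => (x : T) < (y : T)) := hT t
  have hdct : ∀ ⦃s⦄, s ∈ {v : T | v < t} → ∀ ⦃v : T⦄, v < s → v ∈ {v : T | v < t} :=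
    fun s hs v hv => lt_trans hv hs
  have hnt : nodeHt t = @Ordinal.type ↥{v : T | v < t}
      (fun x y : ↥{v : T | v < t} => (x : T) < (y : T)) hwt := dif_pos hwt
  rw [hnt] at hcon
  obtain ⟨u, hu⟩ := Ordinal.typein_surj _ hcon
  have hu' : nodeHt (u : T) = η := by
    rw [nodeHt_eq_typein hT hwt hdct u.2]; exact hu
  have hub : (u : T) ∈ b := hbBr.2 htb u.2
  have huM : (u : T) ∈ M.nodes :=
    M.branch_node_at b hbM hbBr (u : T) hub (hu' ▸ hηS.1)
  have hle : nodeHt (u : T) ≤ eta M.nodes t := by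
    apply le_csSup
    · rw [Set.image_eq_range]
      exact Ordinal.bddAbove_range _
    · exact ⟨(u : T), ⟨huM, le_of_lt u.2⟩, rfl⟩
  have : eta M.nodes t = η := le_antisymm hηS.2.2 (hu' ▸ hle)
  exact he (this ▸ hηS.1)
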